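/- arXiv:0708.2441 — 3 statements merged into one kernel-verified Lean document; each statement's English description precedes it below -/
import Mathlib

section
/- Let p ∈ Δ^{n−1} be a point with all coordinates strictly positive. Then the map 𝕋ⁿ → S^{2n−1} sending θ to the point (θ₁·√p₁, …, θₙ·√pₙ) is a homeomorphism of the torus 𝕋ⁿ onto the fiber π⁻¹({p}); in particular the torus acts freely and transitively on this fiber. -/
open scoped BigOperators

noncomputable section

/-- The unit sphere `S^{2n-1} = {z ∈ ℂⁿ : ∑ᵢ |zᵢ|² = 1}` in `ℂⁿ`. -/
def sphereC (n : ℕ) : Set (EuclideanSpace ℂ (Fin n)) :=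
  {z | ∑ i, ‖z i‖ ^ 2 = 1}

/-- The fiber `π⁻¹({p})` of `π(z) = (|z₁|²,…,|zₙ|²)` over a point `p` of the simplex,
viewed inside the sphere. -/
def piFiber (n : ℕ) (p : Fin n → ℝ) : Set (EuclideanSpace ℂ (Fin n)) :=
  {z | z ∈ sphereC n ∧ ∀ i, ‖z i‖ ^ 2 = p i}

/-!
Over a point `p` with positive coordinates, the `i`-th coordinate of a point of the fiber is a
complex number of modulus `√pᵢ ≠ 0`, and two such numbers differ by a unique unit complex number.
So `𝕋ⁿ` acts simply transitively on the fiber, and the orbit map at `(√p₁, …, √pₙ)` is a continuous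
bijection from the compact torus onto a Hausdorff space, hence a homeomorphism.
-/

theorem existsUnique_pi_of_forall_existsUnique {ι : Type*} {α : ι → Type*}
    {P : ∀ i, α i → Prop} (h : ∀ i, ∃! a, P i a) : ∃! f : ∀ i, α i, ∀ i, P i (f i) := by
  choose f hf huniq using h
  exact ⟨f, hf, fun g hg => funext fun i => huniq i (g i) (hg i)⟩

theorem Circle.existsUnique_mul_eq {z w : ℂ} (hz : z ≠ 0) (hzw : ‖w‖ = ‖z‖) :
    ∃! u : Circle, (u : ℂ) * z = w := by
  have hnorm : ‖w / z‖ = 1 := by rw [norm_div, hzw, div_self (norm_ne_zero_iff.2 hz)]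
  refine ⟨⟨w / z, mem_sphere_zero_iff_norm.2 hnorm⟩, div_mul_cancel₀ w hz, fun u hu => ?_⟩
  exact Circle.ext ((eq_div_iff hz).2 hu)

section Fiber

variable {n : ℕ} {p : Fin n → ℝ}

theorem norm_eq_sqrt_of_mem_piFiber {z : EuclideanSpace ℂ (Fin n)} (hz : z ∈ piFiber n p)
    (i : Fin n) : ‖z i‖ = Real.sqrt (p i) := by
  rw [← hz.2 i, Real.sqrt_sq (norm_nonneg _)]

theorem existsUnique_torus_mul_eq_of_mem_piFiber (hpos : ∀ i, 0 < p i)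
    {z w : EuclideanSpace ℂ (Fin n)} (hz : z ∈ piFiber n p) (hw : w ∈ piFiber n p) :
    ∃! θ : Fin n → Circle, ∀ i, (θ i : ℂ) * z i = w i := by
  refine existsUnique_pi_of_forall_existsUnique fun i => Circle.existsUnique_mul_eq ?_ ?_
  · rw [← norm_ne_zero_iff, norm_eq_sqrt_of_mem_piFiber hz]
    exact Real.sqrt_ne_zero'.2 (hpos i)
  · rw [norm_eq_sqrt_of_mem_piFiber hz, norm_eq_sqrt_of_mem_piFiber hw]

def sqrtPoint (p : Fin n → ℝ) : EuclideanSpace ℂ (Fin n) :=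
  WithLp.toLp 2 fun i => (Real.sqrt (p i) : ℂ)

theorem sqrtPoint_mem_piFiber (hp : p ∈ stdSimplex ℝ (Fin n)) : sqrtPoint p ∈ piFiber n p := by
  have hnorm : ∀ i, ‖sqrtPoint p i‖ ^ 2 = p i := fun i => by
    rw [sqrtPoint, PiLp.toLp_apply, Complex.norm_real, Real.norm_eq_abs, sq_abs,
      Real.sq_sqrt (hp.1 i)]
  exact ⟨by simpa only [sphereC, Set.mem_ofPred_eq, hnorm] using hp.2, hnorm⟩

def torusSmul (θ : Fin n → Circle) (z : EuclideanSpace ℂ (Fin n)) : EuclideanSpace ℂ (Fin n) :=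
  WithLp.toLp 2 fun i => (θ i : ℂ) * z i

theorem torusSmul_mem_piFiber (θ : Fin n → Circle) {z : EuclideanSpace ℂ (Fin n)}
    (hz : z ∈ piFiber n p) : torusSmul θ z ∈ piFiber n p := by
  simpa only [piFiber, sphereC, Set.mem_ofPred_eq, torusSmul, PiLp.toLp_apply, norm_mul,
    Circle.norm_coe, one_mul] using hz

def torusOrbitMap {z : EuclideanSpace ℂ (Fin n)} (hz : z ∈ piFiber n p) :
    (Fin n → Circle) → piFiber n p :=
  fun θ => ⟨torusSmul θ z, torusSmul_mem_piFiber θ hz⟩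

theorem continuous_torusOrbitMap {z : EuclideanSpace ℂ (Fin n)} (hz : z ∈ piFiber n p) :
    Continuous (torusOrbitMap hz) := by
  unfold torusOrbitMap torusSmul
  fun_prop

theorem bijective_torusOrbitMap (hpos : ∀ i, 0 < p i) {z : EuclideanSpace ℂ (Fin n)}
    (hz : z ∈ piFiber n p) : Function.Bijective (torusOrbitMap hz) := by
  refine (Function.bijective_iff_existsUnique _).2 fun w => ?_
  refine (existsUnique_congr fun θ => ?_).1 (existsUnique_torus_mul_eq_of_mem_piFiber hpos hz w.2)
  simp only [torusOrbitMap, torusSmul, Subtype.ext_iff, PiLp.ext_iff]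

end Fiber

theorem torus_homeo_fiber_general (n : ℕ) (p : Fin n → ℝ)
    (hp : p ∈ stdSimplex ℝ (Fin n)) (hpos : ∀ i, 0 < p i) :
    (∃ e : (Fin n → Circle) ≃ₜ piFiber n p,
        ∀ (θ : Fin n → Circle) (i : Fin n),
          ((e θ : EuclideanSpace ℂ (Fin n)) i) = (θ i : ℂ) * (Real.sqrt (p i) : ℂ)) ∧
    (∀ z ∈ piFiber n p, ∀ w ∈ piFiber n p,
        ∃! θ : Fin n → Circle, ∀ i, (θ i : ℂ) * z i = w i) := by
  have hz₀ := sqrtPoint_mem_piFiber hp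
  refine ⟨⟨(continuous_torusOrbitMap hz₀).homeoOfEquivCompactToT2
    (f := Equiv.ofBijective _ (bijective_torusOrbitMap hpos hz₀)), fun θ i => rfl⟩,
    fun z hz w hw => existsUnique_torus_mul_eq_of_mem_piFiber hpos hz hw⟩

/-- For a point `p` of the standard simplex with all coordinates strictly positive, the map
`θ ↦ (θ₁·√p₁, …, θₙ·√pₙ)` is a homeomorphism of the torus `𝕋ⁿ = (Fin n → Circle)` onto the
fiber `π⁻¹({p})`; in particular the torus acts freely and transitively on this fiber. -/
theorem torus_homeo_fiber (n : ℕ) (hn : 1 ≤ n) (p : Fin n → ℝ)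
    (hp : p ∈ stdSimplex ℝ (Fin n)) (hpos : ∀ i, 0 < p i) :
    (∃ e : (Fin n → Circle) ≃ₜ piFiber n p,
        ∀ (θ : Fin n → Circle) (i : Fin n),
          ((e θ : EuclideanSpace ℂ (Fin n)) i) = (θ i : ℂ) * (Real.sqrt (p i) : ℂ)) ∧
    (∀ z ∈ piFiber n p, ∀ w ∈ piFiber n p,
        ∃! θ : Fin n → Circle, ∀ i, (θ i : ℂ) * z i = w i) :=
  torus_homeo_fiber_general n p hp hpos
end
end

section
/- (Lemma on decorations, part 4) Suppose λ satisfies the perimeter-function conditions and (λ, ord) is compatible, where ord is an order function. If i ∈ I is a semistable sphere with nodes p and q, then any component associated to i has strictly lower order: ord(c(ι p)) < ord(i) and ord(c(ι q)) < ord(i). -/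
/-- (Lemma on decorations, part 4) Suppose the perimeter function `λ` satisfies the
perimeter-function conditions, `ord` is an order function and `(λ, ord)` is compatible.
If `i` is a semistable sphere with nodes `p` and `q`, then any component associated to it
has strictly lower order: `ord(c(ι p)) < ord(i)` and `ord(c(ι q)) < ord(i)`. -/
theorem semistable_sphere_associated_components_lower_order
    {I N P : Type*} [Fintype I] [Nonempty I] [Fintype N] [Fintype P]
    (ι : N → N) (hinv : ∀ p, ι (ι p) = p) (hfix : ∀ p, ι p ≠ p)
    (c : N → I) (d : P → I)
    (lamP : P → ℝ) (lamN : N → ℝ)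
    (hlamP : ∀ x, lamP x ∈ Set.Icc (0 : ℝ) 1) (hlamN : ∀ p, lamN p ∈ Set.Icc (0 : ℝ) 1)
    -- perimeter-function condition: equal values on the two nodes of a semistable sphere
    (hsphere : ∀ (i : I) (p q : N), p ≠ q → c ⁻¹' {i} = {p, q} → (∀ x : P, d x ≠ i) →
      lamN p = lamN q)
    -- perimeter-function condition: every component has a point with positive decoration
    (hpos : ∀ i : I, (∃ x : P, d x = i ∧ 0 < lamP x) ∨ (∃ r : N, c r = i ∧ 0 < lamN r))
    -- order function
    (ord : I → ℕ) (hord : ∀ i k, ord i = k → 0 < k → ∃ j, ord j = k - 1)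
    -- compatibility of `(λ, ord)`
    (hcompat : ∀ p, 0 < lamN p ↔ lamN (ι p) = 0)
    (hcompat' : ∀ p, 0 < lamN p → ord (c (ι p)) < ord (c p))
    -- `i` is a semistable sphere with nodes `p` and `q`
    (i : I) (p q : N) (hpq : p ≠ q) (hnodes : c ⁻¹' {i} = {p, q}) (hnolabel : ∀ x : P, d x ≠ i) :
    ord (c (ι p)) < ord i ∧ ord (c (ι q)) < ord i := by
  have hcp : c p = i := by
    have : p ∈ c ⁻¹' {i} := by rw [hnodes]; left; rfl
    simpa using this
  have hcq : c q = i := by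
    have : q ∈ c ⁻¹' {i} := by rw [hnodes]; right; rfl
    simpa using this
  have heq := hsphere i p q hpq hnodes hnolabel
  have hposP : 0 < lamN p := by
    rcases hpos i with ⟨x, hx, _⟩ | ⟨r, hr, hrpos⟩
    · exact absurd hx (hnolabel x)
    · have : r ∈ c ⁻¹' {i} := hr
      rw [hnodes] at this
      rcases this with h | h
      · subst h; exact hrpos
      · simp only [Set.mem_singleton_iff] at h; subst h; rwa [heq]
  refine ⟨?_, ?_⟩
  · have := hcompat' p hposP; rwa [hcp] at this
  · have := hcompat' q (heq ▸ hposP); rwa [hcq] at this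
end

section
/- For a ribbon graph (H, σ₀, σ₁), the integer |V(Γ)| − |E(Γ)| + |C(Γ)| is even, where |V(Γ)| is the number of orbits of σ₀ on H, |E(Γ)| is the number of orbits of σ₁ on H (which equals |H|/2), and |C(Γ)| is the number of orbits of σ∞ = σ₀⁻¹σ₁ on H. (This is the parity statement which makes the genus formula g = (2 − χ − n)/2 of each connected component, with χ = |V| − |E| and n the number of boundary cycles, yield an integer.) -/
/-!
Counting fixed points as cycles of length one, `sign σ = (-1) ^ (|H| - #orbits(σ))`. Applying
multiplicativity of the sign to `σ∞ = σ₀⁻¹ σ₁` gives `|H| - C ≡ (|H| - V) + (|H| - E) (mod 2)`,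
and `|H|` is even because `σ₁` pairs off the half-edges.
-/

noncomputable section

/-- The number of orbits of (the cyclic group generated by) a permutation `σ` on `H`. -/
def numOrbits {H : Type*} [Fintype H] (σ : Equiv.Perm H) : ℕ :=
  Nat.card (MulAction.orbitRel.Quotient (Subgroup.zpowers σ) H)

open Equiv Perm Function

namespace Equiv.Perm

theorem orbitRel_zpowers_iff_sameCycle {H : Type*} (σ : Perm H) {x y : H} :
    MulAction.orbitRel (Subgroup.zpowers σ) H x y ↔ σ.SameCycle x y := by
  rw [MulAction.orbitRel_apply, sameCycle_comm]
  constructor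
  · rintro ⟨⟨_, k, rfl⟩, rfl⟩
    exact ⟨k, rfl⟩
  · rintro ⟨k, rfl⟩
    exact ⟨⟨σ ^ k, k, rfl⟩, rfl⟩

variable {H : Type*} [Fintype H] [DecidableEq H]

def fixedPointOrCycle (σ : Perm H) (x : H) : fixedPoints σ ⊕ σ.cycleFactorsFinset :=
  if hx : σ x = x then .inl ⟨x, hx⟩
  else .inr ⟨σ.cycleOf x, cycleOf_mem_cycleFactorsFinset_iff.2 (mem_support.2 hx)⟩

theorem fixedPointOrCycle_eq_iff (σ : Perm H) {x y : H} :
    fixedPointOrCycle σ x = fixedPointOrCycle σ y ↔ σ.SameCycle x y := by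
  by_cases hx : σ x = x <;> by_cases hy : σ y = y <;>
    simp only [fixedPointOrCycle, hx, hy, dif_pos, dif_neg, not_false_eq_true, reduceCtorEq,
      false_iff, Sum.inl.injEq, Sum.inr.injEq, Subtype.ext_iff]
  · exact ⟨fun h => h ▸ .refl σ x, fun h => h.eq_of_left hx⟩
  · exact fun h => hy (h.apply_eq_self_iff.1 hx)
  · exact fun h => hx (h.apply_eq_self_iff.2 hy)
  · refine ⟨fun h => ?_, SameCycle.cycleOf_eq⟩
    have hyx : y ∈ (σ.cycleOf x).support :=
      h ▸ mem_support_cycleOf_iff.2 ⟨.refl σ y, mem_support.2 hy⟩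
    exact (mem_support_cycleOf_iff.1 hyx).1

theorem fixedPointOrCycle_surjective (σ : Perm H) : Surjective (fixedPointOrCycle σ) := by
  rintro (⟨x, hx⟩ | ⟨c, hc⟩)
  · exact ⟨x, dif_pos hx⟩
  · obtain ⟨x, hxc⟩ := (mem_cycleFactorsFinset_iff.1 hc).1.nonempty_support
    have hx : σ x ≠ x := mem_support.1 (mem_cycleFactorsFinset_support_le hc hxc)
    exact ⟨x, by simp [fixedPointOrCycle, hx, ← cycle_is_cycleOf hxc hc]⟩

theorem numOrbits_eq_card_fixedPoints_add_card_cycleType (σ : Perm H) :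
    numOrbits σ = Fintype.card (fixedPoints σ) + Multiset.card σ.cycleType := by
  have hker : MulAction.orbitRel (Subgroup.zpowers σ) H = Setoid.ker (fixedPointOrCycle σ) :=
    Setoid.ext fun x y => by
      rw [orbitRel_zpowers_iff_sameCycle, Setoid.ker_def, fixedPointOrCycle_eq_iff]
  rw [numOrbits, MulAction.orbitRel.Quotient, hker,
    Nat.card_congr (Setoid.quotientKerEquivOfSurjective _ (fixedPointOrCycle_surjective σ)),
    Nat.card_sum, Nat.card_eq_fintype_card, Nat.card_eq_finsetCard, cycleType_def,
    Multiset.card_map]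
  rfl

theorem sign_eq_negOnePow_card_sub_numOrbits (σ : Perm H) :
    sign σ = ((Fintype.card H : ℤ) - numOrbits σ).negOnePow := by
  have hsum := σ.sum_cycleType_le
  rw [sign_of_cycleType, numOrbits_eq_card_fixedPoints_add_card_cycleType, card_fixedPoints,
    ← zpow_natCast, ← Int.negOnePow_def, Int.negOnePow_eq_iff]
  exact ⟨Multiset.card σ.cycleType, by push_cast [Nat.cast_sub hsum]; ring⟩

theorem even_card_of_involutive_of_forall_apply_ne (τ : Perm H) (hinv : Involutive τ)
    (hfix : ∀ h, τ h ≠ h) : Even (Fintype.card H) := by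
  have hsq : τ ^ 2 = 1 := Equiv.ext hinv
  have hsupp : τ.support = Finset.univ := Finset.eq_univ_of_forall fun h => mem_support.2 (hfix h)
  rw [even_iff_two_dvd, ← Finset.card_univ, ← hsupp]
  exact two_dvd_card_support hsq

end Equiv.Perm

/-- For a ribbon graph `(H, σ₀, σ₁)`, where `σ₁` is a fixed-point-free involution, the integer
`|V(Γ)| − |E(Γ)| + |C(Γ)|` is even, where `|V(Γ)|`, `|E(Γ)|`, `|C(Γ)|` are the numbers of
orbits on `H` of `σ₀`, of `σ₁`, and of `σ∞ = σ₀⁻¹σ₁` respectively. This parity makes the genus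
formula `g = (2 − χ − n)/2` of each connected component an integer. -/
theorem ribbonGraph_euler_parity {H : Type*} [Fintype H] (σ₀ σ₁ : Equiv.Perm H)
    (hinv : ∀ h, σ₁ (σ₁ h) = h) (hfix : ∀ h, σ₁ h ≠ h) :
    Even ((numOrbits σ₀ : ℤ) - (numOrbits σ₁ : ℤ) + (numOrbits (σ₀⁻¹ * σ₁) : ℤ)) := by
  classical
  obtain ⟨m, hm⟩ := even_card_of_involutive_of_forall_apply_ne σ₁ hinv hfix
  have hsign : sign (σ₀⁻¹ * σ₁) = sign σ₀ * sign σ₁ := by rw [Perm.sign_mul, sign_inv]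
  rw [sign_eq_negOnePow_card_sub_numOrbits, sign_eq_negOnePow_card_sub_numOrbits,
    sign_eq_negOnePow_card_sub_numOrbits, ← Int.negOnePow_add, Int.negOnePow_eq_iff] at hsign
  obtain ⟨k, hk⟩ := hsign
  exact ⟨k + numOrbits (σ₀⁻¹ * σ₁) - numOrbits σ₁ + m, by push_cast [hm] at hk ⊢; linarith⟩
end
end
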